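/- Let K₊ = {a/g ∈ ℂ(q,λ) : a, g ∈ ℂ[q,λ], g(ζ,0) ≠ 0 for every root of unity ζ} and K₋ = {a/(f₀·f₁) ∈ ℂ(q,λ) : a ∈ ℂ[q,λ], f₀(q) = ∏_{s=1}^{N} (1 − ζ_s q) with each ζ_s a root of unity, f₁ ∈ ℂ[λ] with f₁(0) ≠ 0, and deg_q a < N}. Then K₊ ∩ K₋ = {0}, and every element of ℂ(q,λ) of the form a/(g·f₀·f₁), with a ∈ ℂ[q,λ] and g, f₀, f₁ as above, is the sum of an element of K₊ and an element of K₋; in other words, the localization S⁻¹ℂ[q,λ] decomposes as the direct sum K₊ ⊕ K₋ of ℂ-vector spaces. -/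

import Mathlib

open Polynomial

noncomputable section

/-- A complex number is a root of unity if some positive power of it equals `1`. -/
def IsRootOfUnity (ζ : ℂ) : Prop := ∃ n : ℕ, 0 < n ∧ ζ ^ n = 1

/-- The polynomial ring `ℂ[q,λ]`, realized as polynomials in `λ` (the outer variable) with
coefficients in `ℂ[q]` (the inner variable). -/
abbrev QL := Polynomial (Polynomial ℂ)

/-- The field `ℂ(q,λ)` of rational functions in two variables. -/
abbrev QLField := FractionRing QL

/-- A polynomial in the variable `q` alone, viewed in `ℂ[q,λ]`. -/
noncomputable def ofQ (p : Polynomial ℂ) : QL := Polynomial.C p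

/-- A polynomial in the variable `λ` alone, viewed in `ℂ[q,λ]`. -/
noncomputable def ofL (p : Polynomial ℂ) : QL := p.map (Polynomial.C : ℂ →+* Polynomial ℂ)

/-- The subspace `K₊` of `ℂ(q,λ)`: fractions `a/g` with `g(ζ,0) ≠ 0` for every
root of unity `ζ`. -/
def Kplus : Set QLField :=
  {x | ∃ a g : QL, (∀ ζ : ℂ, IsRootOfUnity ζ → (g.eval (0 : Polynomial ℂ)).eval ζ ≠ 0) ∧
    x = algebraMap QL QLField a / algebraMap QL QLField g}

/-- The subspace `K₋` of `ℂ(q,λ)`: fractions `a/(f₀·f₁)` where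
`f₀(q) = ∏_{s=1}^{N} (1 − ζ_s q)` with each `ζ_s` a root of unity, `f₁ ∈ ℂ[λ]` with
`f₁(0) ≠ 0`, and `deg_q a < N`. -/
def Kminus : Set QLField :=
  {x | ∃ (a : QL) (N : ℕ) (ζs : Fin N → ℂ) (f₁ : Polynomial ℂ),
    (∀ i, IsRootOfUnity (ζs i)) ∧ f₁.eval 0 ≠ 0 ∧
    (∀ k : ℕ, (a.coeff k).degree < (N : WithBot ℕ)) ∧
    x = algebraMap QL QLField a /
      algebraMap QL QLField
        (ofQ (∏ i, (1 - Polynomial.C (ζs i) * Polynomial.X)) * ofL f₁)}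

/-!
If `a/g = b/(F f₁)` with `F = ∏ (1 - ζᵢ q)`, then `F` divides `b g` coefficientwise in `λ`.
Comparing lowest `λ`-coefficients, `F` divides `b_k g(q,0)` for the lowest coefficient `b_k` of
`b`; each factor `1 - ζ q` is coprime to `g(q,0)` because `g(ζ⁻¹,0) ≠ 0`, so `F ∣ b_k`, and
`deg_q b_k < deg F` forces `b = 0`.

For the decomposition, division by one factor `u = 1 - ζ q` gives `g = γ + u w` with
`γ(λ) = g(ζ⁻¹,λ)`, `γ(0) ≠ 0`, hence `1/(g u) = 1/(γ u) - w/(g γ)`. Peeling off the factors of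
`F` one at a time writes `a/(g F f₁)` as an element of `K₊` plus a fraction `c/(F f)` with
`f ∈ ℂ[λ]`, `f(0) ≠ 0`. Euclidean division `c = Q F + R` in `q` then splits the latter into
`Q/f ∈ K₊` and `R/(F f) ∈ K₋`.
-/

open scoped Pointwise

local notation "φ" => algebraMap QL QLField

lemma IsRootOfUnity.ne_zero {ζ : ℂ} (h : IsRootOfUnity ζ) : ζ ≠ 0 := by
  rintro rfl
  obtain ⟨n, hn, h⟩ := h
  simp [zero_pow hn.ne'] at h

lemma IsRootOfUnity.inv {ζ : ℂ} (h : IsRootOfUnity ζ) : IsRootOfUnity ζ⁻¹ := by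
  obtain ⟨n, hn, h⟩ := h
  exact ⟨n, hn, by rw [inv_pow, h, inv_one]⟩

lemma degree_one_sub_C_mul_X {ζ : ℂ} (hζ : ζ ≠ 0) : (1 - C ζ * X : ℂ[X]).degree = 1 := by
  rw [show (1 - C ζ * X : ℂ[X]) = C (-ζ) * X + C 1 by simp; ring]
  exact degree_linear (neg_ne_zero.2 hζ)

lemma degree_prod_one_sub_C_mul_X {N : ℕ} {ζs : Fin N → ℂ} (hζ : ∀ i, ζs i ≠ 0) :
    (∏ i, (1 - C (ζs i) * X)).degree = (N : WithBot ℕ) := by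
  simp [degree_prod, degree_one_sub_C_mul_X (hζ _)]

lemma one_sub_C_mul_X_ne_zero (ζ : ℂ) : (1 - C ζ * X : ℂ[X]) ≠ 0 :=
  fun h => by simpa using congrArg (eval 0) h

lemma prod_one_sub_C_mul_X_ne_zero {N : ℕ} (ζs : Fin N → ℂ) : ∏ i, (1 - C (ζs i) * X) ≠ 0 :=
  Finset.prod_ne_zero_iff.2 fun _ _ => one_sub_C_mul_X_ne_zero _

lemma one_sub_C_mul_X_dvd_sub_C_eval {ζ : ℂ} (hζ : ζ ≠ 0) (p : ℂ[X]) :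
    1 - C ζ * X ∣ p - C (p.eval ζ⁻¹) := by
  refine dvd_trans ⟨-C ζ⁻¹, ?_⟩ X_sub_C_dvd_sub_C_eval
  have h : C ζ * C ζ⁻¹ = (1 : ℂ[X]) := by rw [← C_mul, mul_inv_cancel₀ hζ, C_1]
  linear_combination (-X : ℂ[X]) * h

lemma isCoprime_one_sub_C_mul_X {ζ : ℂ} (hζ : ζ ≠ 0) {p : ℂ[X]} (hp : p.eval ζ⁻¹ ≠ 0) :
    IsCoprime (1 - C ζ * X) p := by
  refine (irreducible_of_degree_eq_one (degree_one_sub_C_mul_X hζ)).coprime_iff_not_dvd.2 ?_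
  rintro ⟨r, rfl⟩
  simp [hζ] at hp

lemma algebraMap_QL_ne_zero {x : QL} (h : x ≠ 0) : φ x ≠ 0 :=
  IsFractionRing.to_map_eq_zero_iff.not.2 h

lemma ofQ_ne_zero {p : ℂ[X]} (h : p ≠ 0) : ofQ p ≠ 0 := C_ne_zero.2 h

lemma algebraMap_ofQ_ne_zero {p : ℂ[X]} (h : p ≠ 0) : φ (ofQ p) ≠ 0 :=
  algebraMap_QL_ne_zero (ofQ_ne_zero h)

lemma ofL_mul (f f' : ℂ[X]) : ofL (f * f') = ofL f * ofL f' := Polynomial.map_mul _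

lemma ofQ_mul (p p' : ℂ[X]) : ofQ (p * p') = ofQ p * ofQ p' := map_mul _ _ _

lemma eval_eval_zero_ofL (f : ℂ[X]) (ζ : ℂ) : ((ofL f).eval 0).eval ζ = f.eval 0 := by
  simp [ofL, eval_zero_map]

lemma exists_eq_ofL_add_ofQ_mul (g : QL) {ζ : ℂ} (hζ : ζ ≠ 0) :
    ∃ w, g = ofL (g.map (evalRingHom ζ⁻¹)) + ofQ (1 - C ζ * X) * w := by
  have hdvd : ofQ (1 - C ζ * X) ∣ g - ofL (g.map (evalRingHom ζ⁻¹)) := by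
    refine (C_dvd_iff_dvd_coeff _ _).2 fun k => ?_
    simpa [ofL] using one_sub_C_mul_X_dvd_sub_C_eval hζ (g.coeff k)
  obtain ⟨w, hw⟩ := hdvd
  exact ⟨w, sub_eq_iff_eq_add'.1 hw⟩

lemma exists_eq_mul_ofQ_add_of_degree_lt {F : ℂ[X]} (hF : F ≠ 0) (a : QL) :
    ∃ Q R : QL, a = Q * ofQ F + R ∧ ∀ k, (R.coeff k).degree < F.degree := by
  induction a using Polynomial.induction_on' with
  | add a a' ha ha' =>
    obtain ⟨Q, R, rfl, hR⟩ := ha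
    obtain ⟨Q', R', rfl, hR'⟩ := ha'
    refine ⟨Q + Q', R + R', by ring, fun k => ?_⟩
    rw [coeff_add]
    exact (degree_add_le _ _).trans_lt (max_lt (hR k) (hR' k))
  | monomial n p =>
    refine ⟨monomial n (p / F), monomial n (p % F), ?_, fun k => ?_⟩
    · rw [ofQ, monomial_mul_C, ← map_add, mul_comm, EuclideanDomain.div_add_mod]
    · rw [coeff_monomial]
      split_ifs
      · exact degree_mod_lt p hF
      · exact degree_zero.trans_lt (bot_lt_iff_ne_bot.2 (degree_ne_bot.2 hF))

def NonvanishingAtRootsOfUnity (g : QL) : Prop :=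
  ∀ ζ : ℂ, IsRootOfUnity ζ → (g.eval (0 : ℂ[X])).eval ζ ≠ 0

namespace NonvanishingAtRootsOfUnity

lemma coeff_zero_ne_zero {g : QL} (hg : NonvanishingAtRootsOfUnity g) : g.coeff 0 ≠ 0 :=
  fun h => hg 1 ⟨1, one_pos, one_pow 1⟩ (by rw [← coeff_zero_eq_eval_zero, h, eval_zero])

lemma ne_zero {g : QL} (hg : NonvanishingAtRootsOfUnity g) : g ≠ 0 :=
  fun h => hg.coeff_zero_ne_zero (by simp [h])

lemma mul {g g' : QL} (hg : NonvanishingAtRootsOfUnity g)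
    (hg' : NonvanishingAtRootsOfUnity g') : NonvanishingAtRootsOfUnity (g * g') := fun ζ hζ => by
  simpa using mul_ne_zero (hg ζ hζ) (hg' ζ hζ)

lemma ofL {f : ℂ[X]} (hf : f.eval 0 ≠ 0) : NonvanishingAtRootsOfUnity (ofL f) := fun ζ _ => by
  rwa [eval_eval_zero_ofL]

end NonvanishingAtRootsOfUnity

lemma algebraMap_ofL_ne_zero {f : ℂ[X]} (hf : f.eval 0 ≠ 0) : φ (ofL f) ≠ 0 :=
  algebraMap_QL_ne_zero (NonvanishingAtRootsOfUnity.ofL hf).ne_zero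

lemma div_mem_Kplus (a : QL) {g : QL} (hg : NonvanishingAtRootsOfUnity g) : φ a / φ g ∈ Kplus :=
  ⟨a, g, hg, rfl⟩

lemma add_mem_Kplus {x y : QLField} (hx : x ∈ Kplus) (hy : y ∈ Kplus) : x + y ∈ Kplus := by
  obtain ⟨a, g, hg : NonvanishingAtRootsOfUnity g, rfl⟩ := hx
  obtain ⟨a', g', hg' : NonvanishingAtRootsOfUnity g', rfl⟩ := hy
  refine ⟨a * g' + a' * g, g * g', hg.mul hg', ?_⟩
  have := algebraMap_QL_ne_zero hg.ne_zero
  have := algebraMap_QL_ne_zero hg'.ne_zero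
  simp only [map_add, map_mul]
  field_simp

lemma eq_zero_of_ofQ_dvd_mul {F : ℂ[X]} {b g : QL} (hcop : IsCoprime F (g.coeff 0))
    (hg : g.coeff 0 ≠ 0) (hb : ∀ k, (b.coeff k).degree < F.degree) (h : ofQ F ∣ b * g) :
    b = 0 := by
  have hdvd : F ∣ b.trailingCoeff * g.coeff 0 := by
    rw [← trailingCoeff_eq_coeff_zero hg, ← trailingCoeff_mul]
    exact (C_dvd_iff_dvd_coeff _ _).1 h _
  exact trailingCoeff_eq_zero.1
    (eq_zero_of_dvd_of_degree_lt (hcop.dvd_of_dvd_mul_right hdvd) (hb _))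

lemma Kplus_inter_Kminus : Kplus ∩ Kminus = {0} := by
  ext x
  constructor
  · rintro ⟨⟨a, g, hg : NonvanishingAtRootsOfUnity g, rfl⟩, ⟨b, N, ζs, f₁, hζ, hf₁, hdeg, hx⟩⟩
    have hmul : a * (ofQ (∏ i, (1 - C (ζs i) * X)) * ofL f₁) = b * g := by
      refine IsFractionRing.injective QL QLField ?_
      rw [map_mul, map_mul, map_mul, ← div_eq_div_iff (algebraMap_QL_ne_zero hg.ne_zero)
        (mul_ne_zero (algebraMap_ofQ_ne_zero (prod_one_sub_C_mul_X_ne_zero ζs))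
          (algebraMap_ofL_ne_zero hf₁))]
      simpa only [map_mul] using hx
    have hb : b = 0 := by
      refine eq_zero_of_ofQ_dvd_mul (IsCoprime.prod_left fun i _ => ?_) hg.coeff_zero_ne_zero
        (fun k => (hdeg k).trans_eq (degree_prod_one_sub_C_mul_X fun i => (hζ i).ne_zero).symm)
        ⟨a * ofL f₁, by rw [← hmul]; ring⟩
      refine isCoprime_one_sub_C_mul_X (hζ i).ne_zero ?_
      rw [coeff_zero_eq_eval_zero]
      exact hg _ (hζ i).inv
    simp [hx, hb]
  · rintro rfl
    exact ⟨⟨0, 1, fun _ _ => by simp, by simp⟩,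
      ⟨0, 0, Fin.elim0, 1, fun i => i.elim0, by simp, by simp, by simp⟩⟩

/-- `K₋` without the bound on `deg_q`, for a fixed `q`-part `F` of the denominator. -/
def fractionsOver (F : ℂ[X]) : Set QLField :=
  {x | ∃ (c : QL) (f : ℂ[X]), f.eval 0 ≠ 0 ∧ x = φ c / φ (ofQ F * ofL f)}

section fractionsOver

variable {F : ℂ[X]}

lemma div_mem_fractionsOver (c : QL) {f : ℂ[X]} (hf : f.eval 0 ≠ 0) :
    φ c / φ (ofQ F * ofL f) ∈ fractionsOver F :=
  ⟨c, f, hf, rfl⟩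

lemma add_mem_fractionsOver (hF : F ≠ 0) {x y : QLField} (hx : x ∈ fractionsOver F)
    (hy : y ∈ fractionsOver F) : x + y ∈ fractionsOver F := by
  obtain ⟨c, f, hf, rfl⟩ := hx
  obtain ⟨c', f', hf', rfl⟩ := hy
  refine ⟨c * ofL f' + c' * ofL f, f * f', by simp [hf, hf'], ?_⟩
  have := algebraMap_ofQ_ne_zero hF
  have := algebraMap_ofL_ne_zero hf
  have := algebraMap_ofL_ne_zero hf'
  simp only [map_add, map_mul, ofL_mul]
  field_simp

lemma fractionsOver_subset_mul {p : ℂ[X]} (hp : p ≠ 0) (hF : F ≠ 0) :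
    fractionsOver F ⊆ fractionsOver (p * F) := by
  rintro _ ⟨c, f, hf, rfl⟩
  refine ⟨c * ofQ p, f, hf, ?_⟩
  have := algebraMap_ofQ_ne_zero hF
  have := algebraMap_ofQ_ne_zero hp
  have := algebraMap_ofL_ne_zero hf
  simp only [map_mul, ofQ_mul]
  field_simp

lemma add_mem_Kplus_add_fractionsOver (hF : F ≠ 0) {x y : QLField} (hx : x ∈ fractionsOver F)
    (hy : y ∈ Kplus + fractionsOver F) : x + y ∈ Kplus + fractionsOver F := by
  obtain ⟨p, hp, m, hm, rfl⟩ := hy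
  exact ⟨p, hp, x + m, add_mem_fractionsOver hF hx hm, by ring⟩

end fractionsOver

lemma fractionsOver_prod_subset {N : ℕ} {ζs : Fin N → ℂ} (hζ : ∀ i, IsRootOfUnity (ζs i)) :
    fractionsOver (∏ i, (1 - C (ζs i) * X)) ⊆ Kplus + Kminus := by
  rintro _ ⟨c, f, hf, rfl⟩
  set F := ∏ i, (1 - C (ζs i) * X)
  have hF : F ≠ 0 := prod_one_sub_C_mul_X_ne_zero ζs
  obtain ⟨Q, R, rfl, hR⟩ := exists_eq_mul_ofQ_add_of_degree_lt hF c
  refine ⟨φ Q / φ (ofL f), div_mem_Kplus Q (.ofL hf), φ R / φ (ofQ F * ofL f),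
    ⟨R, N, ζs, f, hζ, hf, fun k => ?_, rfl⟩, ?_⟩
  · exact (hR k).trans_eq (degree_prod_one_sub_C_mul_X fun i => (hζ i).ne_zero)
  · have := algebraMap_ofQ_ne_zero hF
    have := algebraMap_ofL_ne_zero hf
    simp only [map_add, map_mul]
    field_simp

lemma mem_Kplus_add_fractionsOver {g : QL} (hg : NonvanishingAtRootsOfUnity g) :
    ∀ {N : ℕ} {ζs : Fin N → ℂ}, (∀ i, IsRootOfUnity (ζs i)) → ∀ (a : QL) {f₁ : ℂ[X]},
      f₁.eval 0 ≠ 0 → φ a / φ (g * ofQ (∏ i, (1 - C (ζs i) * X)) * ofL f₁) ∈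
        Kplus + fractionsOver (∏ i, (1 - C (ζs i) * X))
  | 0, ζs, _, a, f₁, hf₁ => by
    refine ⟨_, div_mem_Kplus a (hg.mul (.ofL hf₁)), 0, ⟨0, 1, by simp, by simp⟩, ?_⟩
    simp [ofQ]
  | N + 1, ζs, hζ, a, f₁, hf₁ => by
    obtain ⟨w, hw⟩ := exists_eq_ofL_add_ofQ_mul g (hζ 0).ne_zero
    set γ := g.map (evalRingHom (ζs 0)⁻¹)
    have hγ : γ.eval 0 ≠ 0 := by simpa [γ, eval_zero_map] using hg _ (hζ 0).inv
    have hγf₁ : (γ * f₁).eval 0 ≠ 0 := by simpa using mul_ne_zero hγ hf₁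
    have ih := mem_Kplus_add_fractionsOver hg (fun i => hζ i.succ) (-(a * w)) hγf₁
    rw [Fin.prod_univ_succ]
    set u := 1 - C (ζs 0) * X
    set F := ∏ i : Fin N, (1 - C (ζs i.succ) * X)
    have hu : u ≠ 0 := one_sub_C_mul_X_ne_zero _
    have hF : F ≠ 0 := prod_one_sub_C_mul_X_ne_zero _
    have key : φ a / φ (g * ofQ (u * F) * ofL f₁) =
        φ a / φ (ofQ (u * F) * ofL (γ * f₁)) + φ (-(a * w)) / φ (g * ofQ F * ofL (γ * f₁)) := by
      have := algebraMap_ofQ_ne_zero hF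
      have := algebraMap_ofQ_ne_zero hu
      have := algebraMap_QL_ne_zero hg.ne_zero
      have := algebraMap_ofL_ne_zero hf₁
      have := algebraMap_ofL_ne_zero hγ
      simp only [map_mul, map_neg, ofQ_mul, ofL_mul]
      field_simp
      rw [hw, map_add, map_mul]
      ring
    rw [key]
    exact add_mem_Kplus_add_fractionsOver (mul_ne_zero hu hF) (div_mem_fractionsOver a hγf₁)
      (Set.add_subset_add_left (fractionsOver_subset_mul hu hF) ih)

/-- The localization `S⁻¹ℂ[q,λ]` decomposes as the direct sum `K₊ ⊕ K₋`: the two subspaces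
intersect trivially, and every fraction `a/(g·f₀·f₁)` with allowed denominator is the sum of
an element of `K₊` and an element of `K₋`. -/
theorem twoVariable_polarization :
    Kplus ∩ Kminus = {0} ∧
    ∀ (a g : QL) (N : ℕ) (ζs : Fin N → ℂ) (f₁ : Polynomial ℂ),
      (∀ ζ : ℂ, IsRootOfUnity ζ → (g.eval (0 : Polynomial ℂ)).eval ζ ≠ 0) →
      (∀ i, IsRootOfUnity (ζs i)) → f₁.eval 0 ≠ 0 →
      ∃ p ∈ Kplus, ∃ m ∈ Kminus,
        algebraMap QL QLField a /
          algebraMap QL QLField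
            (g * ofQ (∏ i, (1 - Polynomial.C (ζs i) * Polynomial.X)) * ofL f₁) = p + m := by
  refine ⟨Kplus_inter_Kminus, fun a g N ζs f₁ hg hζ hf₁ => ?_⟩
  obtain ⟨p, hp, y, hy, hpy⟩ := mem_Kplus_add_fractionsOver hg hζ a hf₁
  obtain ⟨p', hp', m, hm, rfl⟩ := fractionsOver_prod_subset hζ hy
  exact ⟨p + p', add_mem_Kplus hp hp', m, hm, by rw [← hpy, add_assoc]⟩
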